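/- arXiv:1705.03299 — 2 statements merged into one kernel-verified Lean document; each statement's English description precedes it below -/
import Mathlib

section
/- Let V be a finite-dimensional real vector space and T₁, …, T_k commuting linear automorphisms of V such that for all nonnegative integers ν₁, …, ν_k one has (T₁^{ν₁}⋯T_k^{ν_k} - id)² = 0. Set N_i = T_i - id. Then for all real numbers ν₁, …, ν_k the operator (Σᵢ νᵢ Nᵢ)² = 0. -/
/-!
Write `Nᵢ = Tᵢ - 1`. Taking `ν = eᵢ` in the hypothesis gives `Nᵢ² = 0`, and taking
`ν = eᵢ + eⱼ` gives `(TᵢTⱼ - 1)² = 0`. Since `TᵢTⱼ - 1 = Nᵢ + Nⱼ + NᵢNⱼ` and the `Nᵢ` commute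
and square to zero, this square is `2NᵢNⱼ`, so all products `NᵢNⱼ` vanish, and hence so does
the square of every linear combination of the `Nᵢ`.
-/

theorem List.prod_ofFn_pow_add {M : Type*} [Monoid M] {n : ℕ} (f : Fin n → M)
    (hf : ∀ i j, Commute (f i) (f j)) (ν μ : Fin n → ℕ) :
    (List.ofFn fun i => f i ^ (ν + μ) i).prod =
      (List.ofFn fun i => f i ^ ν i).prod * (List.ofFn fun i => f i ^ μ i).prod := by
  induction n with
  | zero => simp
  | succ n ih =>
    have hcomm : Commute (f 0 ^ μ 0) (List.ofFn fun i => f i.succ ^ ν i.succ).prod :=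
      Commute.list_prod_right _ _ fun x hx => by
        obtain ⟨i, rfl⟩ := List.mem_ofFn.mp hx
        exact (hf 0 i.succ).pow_pow _ _
    simp only [Pi.add_apply] at ih ⊢
    rw [List.ofFn_succ, List.prod_cons, pow_add,
      ih (fun i => f i.succ) (fun i j => hf _ _) (fun i => ν i.succ) (fun i => μ i.succ),
      List.ofFn_succ, List.prod_cons, List.ofFn_succ, List.prod_cons, mul_assoc,
      ← mul_assoc (f 0 ^ μ 0), hcomm.eq]
    simp only [mul_assoc]

theorem List.prod_ofFn_pow_single {M : Type*} [Monoid M] {n : ℕ} (f : Fin n → M) (i : Fin n) :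
    (List.ofFn fun j => f j ^ Pi.single i 1 j).prod = f i := by
  induction n with
  | zero => exact i.elim0
  | succ n ih =>
    rw [List.ofFn_succ, List.prod_cons]
    induction i using Fin.cases with
    | zero => simp [Fin.succ_ne_zero]
    | succ i =>
      simpa [Pi.single_apply, (Fin.succ_ne_zero i).symm, Fin.succ_inj] using
        ih (fun j => f j.succ) i

theorem Commute.add_add_mul_sq {R : Type*} [Ring R] {a b : R} (hab : Commute a b)
    (ha : a ^ 2 = 0) (hb : b ^ 2 = 0) : (a + b + a * b) ^ 2 = 2 * (a * b) := by
  have haa : ∀ x, a * (a * x) = 0 := fun x => by rw [← mul_assoc, ← sq, ha, zero_mul]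
  have hba : ∀ x, b * (a * x) = a * (b * x) := fun x => by
    rw [← mul_assoc, ← hab.eq, mul_assoc]
  rw [sq] at ha hb
  simp only [sq, two_mul, mul_add, add_mul, mul_assoc, haa, hba, ha, hb, hab.symm.eq, mul_zero,
    add_zero, zero_add]

theorem Commute.sub_one_mul_sub_one_eq_zero {R : Type*} [Ring R] [Invertible (2 : R)] {s t : R}
    (hst : Commute s t) (hs : (s - 1) ^ 2 = 0) (ht : (t - 1) ^ 2 = 0)
    (hst' : (s * t - 1) ^ 2 = 0) : (s - 1) * (t - 1) = 0 := by
  have hN : Commute (s - 1) (t - 1) :=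
    (hst.sub_left (Commute.one_left t)).sub_right (Commute.one_right _)
  have hexp : s * t - 1 = (s - 1) + (t - 1) + (s - 1) * (t - 1) := by noncomm_ring
  rwa [hexp, hN.add_add_mul_sq hs ht, (isUnit_of_invertible 2).mul_right_eq_zero] at hst'

theorem Finset.sum_smul_sq_eq_zero {ι R A : Type*} [CommSemiring R] [Semiring A] [Algebra R A]
    (s : Finset ι) (c : ι → R) (x : ι → A) (hx : ∀ i ∈ s, ∀ j ∈ s, x i * x j = 0) :
    (∑ i ∈ s, c i • x i) ^ 2 = 0 := by
  rw [sq, Finset.sum_mul_sum]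
  refine Finset.sum_eq_zero fun i hi => Finset.sum_eq_zero fun j hj => ?_
  rw [smul_mul_smul_comm, hx i hi j hj, smul_zero]

theorem stmt7_general {V : Type*} [AddCommGroup V] [Module ℝ V]
    (k : ℕ) (T : Fin k → Module.End ℝ V)
    (hcomm : ∀ i j, Commute (T i) (T j))
    (h : ∀ ν : Fin k → ℕ, ((List.ofFn fun i => T i ^ ν i).prod - 1) ^ 2 = 0) :
    ∀ ν : Fin k → ℝ, (∑ i, ν i • (T i - 1)) ^ 2 = 0 := by
  have hsq : ∀ i, (T i - 1) ^ 2 = 0 := fun i => by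
    simpa [List.prod_ofFn_pow_single] using h (Pi.single i 1)
  have hpair : ∀ i j, (T i * T j - 1) ^ 2 = 0 := fun i j => by
    have := h (Pi.single i 1 + Pi.single j 1)
    rwa [List.prod_ofFn_pow_add T hcomm, List.prod_ofFn_pow_single,
      List.prod_ofFn_pow_single] at this
  intro ν
  exact Finset.univ.sum_smul_sq_eq_zero ν _ fun i _ j _ =>
    (hcomm i j).sub_one_mul_sub_one_eq_zero (hsq i) (hsq j) (hpair i j)

/-- If `T₁, …, T_k` are commuting automorphisms of a finite-dimensional real
vector space such that `(T₁^{ν₁}⋯T_k^{ν_k} - id)² = 0` for all nonnegative integers `νᵢ`,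
and `Nᵢ = Tᵢ - id`, then `(Σᵢ νᵢ Nᵢ)² = 0` for all real `νᵢ`. -/
theorem stmt7 {V : Type*} [AddCommGroup V] [Module ℝ V] [FiniteDimensional ℝ V]
    (k : ℕ) (T : Fin k → Module.End ℝ V)
    (hunit : ∀ i, IsUnit (T i))
    (hcomm : ∀ i j, Commute (T i) (T j))
    (h : ∀ ν : Fin k → ℕ, ((List.ofFn fun i => T i ^ ν i).prod - 1) ^ 2 = 0) :
    ∀ ν : Fin k → ℝ, (∑ i, ν i • (T i - 1)) ^ 2 = 0 :=
  stmt7_general k T hcomm h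
end

section
/- Let U ⊂ ℂⁿ be open, w*₁, …, w*_n holomorphic functions on U, and set Zᵢⱼ = ∂w*ⱼ/∂wᵢ. Assume Z is symmetric (Zᵢⱼ = Zⱼᵢ) on U. Then √-1 ∂∂̄ φ = (√-1/2) Σᵢⱼ (Im Zᵢⱼ) dwᵢ ∧ dw̄ⱼ, where φ = (1/2) Im(Σᵢ w*ᵢ w̄ᵢ). -/
/-!
Writing `φ = (S - conj S) / (4i)` with `S = ∑ₖ w*ₖ w̄ₖ`, the Wirtinger rules give
`∂φ/∂w̄ⱼ = (i/4) (∑ₖ conj (∂ⱼw*ₖ) wₖ - w*ⱼ)`. Applying `∂/∂wᵢ`, the antiholomorphic factors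
`conj (∂ⱼw*ₖ)` are annihilated, leaving `(i/4) (conj Zⱼᵢ - Zᵢⱼ)`, which is `(Im Zᵢⱼ)/2` by symmetry.
The analytic input is that `∂ⱼw*ₖ` is again holomorphic. In several variables this follows from
the Cauchy formula `f'(w) v = (2πi)⁻¹ ∮ f (w + λv) / λ² dλ`, differentiated under the integral sign
with the bound on `f'` supplied by Cauchy's estimate on complex lines.
-/

open Complex ComplexConjugate Filter Topology Metric Set

/-- Wirtinger derivative `∂f/∂wⱼ = (1/2)(∂f/∂xⱼ - i ∂f/∂yⱼ)` of `f : ℂⁿ → ℂ`. -/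
noncomputable def wirt {n : ℕ} (j : Fin n) (f : (Fin n → ℂ) → ℂ)
    (z : Fin n → ℂ) : ℂ :=
  (1 / 2) * (fderiv ℝ f z (Pi.single j 1) -
    Complex.I * fderiv ℝ f z (Pi.single j Complex.I))

/-- Conjugate Wirtinger derivative `∂f/∂w̄ⱼ = (1/2)(∂f/∂xⱼ + i ∂f/∂yⱼ)`. -/
noncomputable def wirtBar {n : ℕ} (j : Fin n) (f : (Fin n → ℂ) → ℂ)
    (z : Fin n → ℂ) : ℂ :=
  (1 / 2) * (fderiv ℝ f z (Pi.single j 1) +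
    Complex.I * fderiv ℝ f z (Pi.single j Complex.I))

section Holomorphic

variable {E F : Type*} [NormedAddCommGroup E] [NormedSpace ℂ E] [NormedAddCommGroup F]
  [NormedSpace ℂ F] {f : E → F}

lemma HasFDerivAt.hasDerivAt_comp_add_smul {f' : E →L[ℂ] F} {x u : E} {c : ℂ}
    (hf : HasFDerivAt f f' (x + c • u)) : HasDerivAt (fun μ : ℂ => f (x + μ • u)) (f' u) c :=
  hf.comp_hasDerivAt c (((hasDerivAt_id c).smul_const u).const_add x |>.congr_deriv (one_smul ℂ u))

theorem norm_fderiv_le_of_forall_mem_closedBall_norm_le {x : E} {R C : ℝ} (hR : 0 < R)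
    (hf : DifferentiableOn ℂ f (closedBall x R)) (hC : ∀ y ∈ closedBall x R, ‖f y‖ ≤ C) :
    ‖fderiv ℂ f x‖ ≤ C / R := by
  have hC₀ : 0 ≤ C := (norm_nonneg _).trans (hC x (mem_closedBall_self hR.le))
  refine ContinuousLinearMap.opNorm_le_of_unit_norm (by positivity) fun u hu => ?_
  have hmaps : MapsTo (fun μ : ℂ => x + μ • u) (closedBall 0 R) (closedBall x R) := by
    intro μ hμ
    simpa [dist_eq_norm, norm_smul, hu] using hμ
  have hline : DiffContOnCl ℂ (fun μ : ℂ => f (x + μ • u)) (ball 0 R) := by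
    refine DifferentiableOn.diffContOnCl ?_
    rw [closure_ball 0 hR.ne']
    exact hf.comp (by fun_prop) hmaps
  have hderiv : deriv (fun μ : ℂ => f (x + μ • u)) 0 = fderiv ℂ f x u := by
    refine HasDerivAt.deriv (HasFDerivAt.hasDerivAt_comp_add_smul ?_)
    rw [zero_smul, add_zero]
    exact (hf.differentiableAt (closedBall_mem_nhds x hR)).hasFDerivAt
  rw [← hderiv]
  exact norm_deriv_le_of_forall_mem_sphere_norm_le hR hline
    fun μ hμ => hC _ (hmaps (sphere_subset_closedBall hμ))

theorem fderiv_apply_eq_cderiv [CompleteSpace F] {U : Set E} (hU : IsOpen U)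
    (hf : DifferentiableOn ℂ f U) {w v : E} {r : ℝ} (hr : 0 < r)
    (hwr : ∀ μ ∈ closedBall (0 : ℂ) r, w + μ • v ∈ U) :
    fderiv ℂ f w v = cderiv r (fun μ => f (w + μ • v)) 0 := by
  have hV : IsOpen ((fun μ : ℂ => w + μ • v) ⁻¹' U) := hU.preimage (by fun_prop)
  have hline : DifferentiableOn ℂ (fun μ : ℂ => f (w + μ • v)) ((fun μ : ℂ => w + μ • v) ⁻¹' U) :=
    hf.comp (by fun_prop) (mapsTo_preimage _ _)
  rw [cderiv_eq_deriv hV hline hr hwr]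
  refine (HasDerivAt.deriv (HasFDerivAt.hasDerivAt_comp_add_smul ?_)).symm
  have hw : w ∈ U := by simpa using hwr 0 (mem_closedBall_self hr.le)
  rw [zero_smul, add_zero]
  exact (hf.differentiableAt (hU.mem_nhds hw)).hasFDerivAt

theorem differentiableAt_intervalIntegral_smul_comp_add [FiniteDimensional ℂ E]
    [FiniteDimensional ℂ F] {U : Set E} (hU : IsOpen U) (hf : DifferentiableOn ℂ f U)
    {k : ℝ → ℂ} {γ : ℝ → E} (hk : Continuous k) (hγ : Continuous γ) (a b : ℝ) {z : E} {ε M : ℝ}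
    (hε : 0 < ε) (hmem : ∀ θ, ∀ w ∈ ball z ε, w + γ θ ∈ U)
    (hM : ∀ θ, ∀ w ∈ ball z ε, ‖fderiv ℂ f (w + γ θ)‖ ≤ M) :
    DifferentiableAt ℂ (fun w => ∫ θ in a..b, k θ • f (w + γ θ)) z := by
  borelize E
  have hcont : ∀ w ∈ ball z ε, Continuous fun θ => k θ • f (w + γ θ) := fun w hw =>
    hk.smul (hf.continuousOn.comp_continuous (continuous_const.add hγ) (hmem · w hw))
  have hderiv : ∀ θ, ∀ w ∈ ball z ε,
      HasFDerivAt (fun w => k θ • f (w + γ θ)) (k θ • fderiv ℂ f (w + γ θ)) w := fun θ w hw =>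
    (((hf.differentiableAt (hU.mem_nhds (hmem θ w hw))).hasFDerivAt.comp w
      ((hasFDerivAt_id w).add_const (γ θ))).const_smul (k θ))
  have hmeas : Measurable fun θ => k θ • fderiv ℂ f (z + γ θ) :=
    hk.measurable.smul ((measurable_fderiv ℂ f).comp (continuous_const.add hγ).measurable)
  refine (intervalIntegral.hasFDerivAt_integral_of_dominated_of_fderiv_le
    (F' := fun w θ => k θ • fderiv ℂ f (w + γ θ)) (bound := fun θ => ‖k θ‖ * M)
    (ball_mem_nhds z hε)
    (eventually_of_mem (ball_mem_nhds z hε) fun w hw => (hcont w hw).aestronglyMeasurable)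
    ((hcont z (mem_ball_self hε)).intervalIntegrable a b)
    hmeas.aestronglyMeasurable
    (MeasureTheory.ae_of_all _ fun θ _ w hw => (norm_smul_le _ _).trans
      (mul_le_mul_of_nonneg_left (hM θ w hw) (norm_nonneg _)))
    ((hk.norm.fun_mul continuous_const).intervalIntegrable a b)
    (MeasureTheory.ae_of_all _ fun θ _ => hderiv θ)).differentiableAt

theorem exists_ball_subset_and_norm_fderiv_le [ProperSpace E] {U : Set E} (hU : IsOpen U)
    (hf : DifferentiableOn ℂ f U) {z : E} (hz : z ∈ U) :
    ∃ ρ > 0, ball z ρ ⊆ U ∧ ∃ M, ∀ y ∈ ball z ρ, ‖fderiv ℂ f y‖ ≤ M := by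
  obtain ⟨ρ, hρ, hρU⟩ : ∃ ρ > 0, closedBall z (2 * ρ) ⊆ U := by
    obtain ⟨ε, hε, hεU⟩ := nhds_basis_closedBall.mem_iff.1 (hU.mem_nhds hz)
    exact ⟨ε / 2, half_pos hε, by rwa [mul_div_cancel₀ _ two_ne_zero]⟩
  obtain ⟨C, hC⟩ := (isCompact_closedBall z (2 * ρ)).exists_bound_of_continuousOn
    (hf.continuousOn.mono hρU)
  refine ⟨ρ, hρ, ball_subset_closedBall.trans
    ((closedBall_subset_closedBall (by linarith)).trans hρU), C / ρ, fun y hy => ?_⟩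
  have hy : closedBall y ρ ⊆ closedBall z (2 * ρ) :=
    closedBall_subset_closedBall' (by linarith [mem_ball.1 hy])
  exact norm_fderiv_le_of_forall_mem_closedBall_norm_le hρ (hf.mono (hy.trans hρU))
    fun x hx => hC x (hy hx)

theorem DifferentiableOn.differentiableAt_fderiv_apply [FiniteDimensional ℂ E]
    [FiniteDimensional ℂ F] {U : Set E} (hU : IsOpen U) (hf : DifferentiableOn ℂ f U) {z : E}
    (hz : z ∈ U) (v : E) : DifferentiableAt ℂ (fun w => fderiv ℂ f w v) z := by
  obtain ⟨ρ, hρ, hball, M, hM⟩ := exists_ball_subset_and_norm_fderiv_le hU hf hz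
  set r := ρ / (2 * (‖v‖ + 1)) with hr_def
  have hr : 0 < r := by positivity
  have htube : ∀ w ∈ ball z (ρ / 2), ∀ μ ∈ closedBall (0 : ℂ) r, w + μ • v ∈ ball z ρ := by
    intro w hw μ hμ
    have hμv : ‖μ • v‖ < ρ / 2 := by
      rw [mem_closedBall_zero_iff] at hμ
      calc ‖μ • v‖ = ‖μ‖ * ‖v‖ := norm_smul μ v
        _ ≤ r * ‖v‖ := by gcongr
        _ < ρ / 2 := by
          rw [hr_def, div_mul_eq_mul_div, div_lt_div_iff₀ (by positivity) two_pos]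
          nlinarith [norm_nonneg v]
    rw [mem_ball, dist_eq_norm, add_sub_right_comm] at *
    linarith [norm_add_le (w - z) (μ • v)]
  have hcauchy :
      (fun w => fderiv ℂ f w v) =ᶠ[𝓝 z] fun w => cderiv r (fun μ => f (w + μ • v)) 0 := by
    filter_upwards [ball_mem_nhds z (half_pos hρ)] with w hw
    exact fderiv_apply_eq_cderiv hU hf hr fun μ hμ => hball (htube w hw μ hμ)
  refine hcauchy.differentiableAt_iff.2 (DifferentiableAt.const_smul ?_ _)
  -- `cderiv` unfolds to `∫ θ in 0..2π, k θ • f (w + circleMap 0 r θ • v)` for a continuous `k`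
  simp only [circleIntegral, smul_smul]
  have hk :
      Continuous fun θ => _root_.deriv (circleMap 0 r) θ * ((circleMap 0 r θ - 0) ^ 2)⁻¹ := by
    simp only [deriv_circleMap, sub_zero]
    exact ((continuous_circleMap 0 r).mul continuous_const).mul
      (((continuous_circleMap 0 r).pow 2).inv₀ fun θ => pow_ne_zero 2 (circleMap_ne_center hr.ne'))
  have hcircle : ∀ θ, ∀ w ∈ ball z (ρ / 2), w + circleMap 0 r θ • v ∈ ball z ρ :=
    fun θ w hw => htube w hw _ (circleMap_mem_closedBall 0 hr.le θ)
  exact differentiableAt_intervalIntegral_smul_comp_add hU hf hk (by fun_prop) _ _ (half_pos hρ)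
    (fun θ w hw => hball (hcircle θ w hw)) fun θ w hw => hM _ (hcircle θ w hw)

end Holomorphic

section Wirtinger

variable {n : ℕ} {f g : (Fin n → ℂ) → ℂ} {z : Fin n → ℂ} (i : Fin n)

lemma wirt_congr_of_eventuallyEq (h : f =ᶠ[𝓝 z] g) : wirt i f z = wirt i g z := by
  simp only [wirt, h.fderiv_eq]

lemma pi_single_I_eq_I_smul : (Pi.single i I : Fin n → ℂ) = I • Pi.single i 1 := by
  rw [← Pi.single_smul', smul_eq_mul, mul_one]

lemma wirt_eq_fderiv (hf : DifferentiableAt ℂ f z) :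
    wirt i f z = fderiv ℂ f z (Pi.single i 1) := by
  simp only [wirt, hf.fderiv_restrictScalars ℝ, ContinuousLinearMap.coe_restrictScalars',
    pi_single_I_eq_I_smul, map_smul, smul_eq_mul]
  linear_combination (-(fderiv ℂ f z (Pi.single i 1)) / 2) * I_sq

lemma wirtBar_eq_zero (hf : DifferentiableAt ℂ f z) : wirtBar i f z = 0 := by
  simp only [wirtBar, hf.fderiv_restrictScalars ℝ, ContinuousLinearMap.coe_restrictScalars',
    pi_single_I_eq_I_smul, map_smul, smul_eq_mul]
  linear_combination (fderiv ℂ f z (Pi.single i 1) / 2) * I_sq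

lemma wirt_apply (k : Fin n) :
    wirt i (fun w => w k) z = Pi.single (M := fun _ => ℂ) i 1 k := by
  rw [wirt_eq_fderiv i (differentiableAt_apply k z), (hasFDerivAt_apply k z).fderiv,
    ContinuousLinearMap.proj_apply]

lemma fderiv_conj_apply (v : Fin n → ℂ) :
    fderiv ℝ (fun w => conj (f w)) z v = conj (fderiv ℝ f z v) :=
  congrArg (· v) (fderiv_star (𝕜 := ℝ) (f := f))

lemma wirt_conj : wirt i (fun w => conj (f w)) z = conj (wirtBar i f z) := by
  simp only [wirt, wirtBar, fderiv_conj_apply, map_mul, map_add, conj_I, map_div₀, map_one,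
    map_ofNat]
  ring

lemma wirtBar_conj : wirtBar i (fun w => conj (f w)) z = conj (wirt i f z) := by
  simp only [wirt, wirtBar, fderiv_conj_apply, map_mul, map_sub, conj_I, map_div₀, map_one,
    map_ofNat]
  ring

lemma wirt_const_mul (hf : DifferentiableAt ℝ f z) (c : ℂ) :
    wirt i (fun w => c * f w) z = c * wirt i f z := by
  simp only [wirt, fderiv_const_mul hf, smul_apply, smul_eq_mul]
  ring

lemma wirtBar_const_mul (hf : DifferentiableAt ℝ f z) (c : ℂ) :
    wirtBar i (fun w => c * f w) z = c * wirtBar i f z := by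
  simp only [wirtBar, fderiv_const_mul hf, smul_apply, smul_eq_mul]
  ring

lemma wirt_sub (hf : DifferentiableAt ℝ f z) (hg : DifferentiableAt ℝ g z) :
    wirt i (fun w => f w - g w) z = wirt i f z - wirt i g z := by
  simp only [wirt, fderiv_fun_sub hf hg, sub_apply]
  ring

lemma wirtBar_sub (hf : DifferentiableAt ℝ f z) (hg : DifferentiableAt ℝ g z) :
    wirtBar i (fun w => f w - g w) z = wirtBar i f z - wirtBar i g z := by
  simp only [wirtBar, fderiv_fun_sub hf hg, sub_apply]
  ring

lemma wirt_mul (hf : DifferentiableAt ℝ f z) (hg : DifferentiableAt ℝ g z) :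
    wirt i (fun w => f w * g w) z = wirt i f z * g z + f z * wirt i g z := by
  simp only [wirt, fderiv_fun_mul hf hg, add_apply, smul_apply, smul_eq_mul]
  ring

lemma wirtBar_mul (hf : DifferentiableAt ℝ f z) (hg : DifferentiableAt ℝ g z) :
    wirtBar i (fun w => f w * g w) z = wirtBar i f z * g z + f z * wirtBar i g z := by
  simp only [wirtBar, fderiv_fun_mul hf hg, add_apply, smul_apply, smul_eq_mul]
  ring

lemma wirt_sum {ι : Type*} (s : Finset ι) {F : ι → (Fin n → ℂ) → ℂ}
    (hF : ∀ k ∈ s, DifferentiableAt ℝ (F k) z) :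
    wirt i (fun w => ∑ k ∈ s, F k w) z = ∑ k ∈ s, wirt i (F k) z := by
  simp only [wirt, fderiv_fun_sum hF, sum_apply, Finset.mul_sum, ← Finset.sum_sub_distrib]

lemma wirtBar_sum {ι : Type*} (s : Finset ι) {F : ι → (Fin n → ℂ) → ℂ}
    (hF : ∀ k ∈ s, DifferentiableAt ℝ (F k) z) :
    wirtBar i (fun w => ∑ k ∈ s, F k w) z = ∑ k ∈ s, wirtBar i (F k) z := by
  simp only [wirtBar, fderiv_fun_sum hF, sum_apply, Finset.mul_sum, ← Finset.sum_add_distrib]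

end Wirtinger

section KahlerPotential

variable {n : ℕ} {z : Fin n → ℂ}

lemma wirtBar_half_im_sum_mul_conj {F : Fin n → (Fin n → ℂ) → ℂ}
    (hF : ∀ k, DifferentiableAt ℂ (F k) z) (j : Fin n) :
    wirtBar j (fun w => ((1 / 2 * (∑ k, F k w * conj (w k)).im : ℝ) : ℂ)) z =
      I / 4 * (∑ k, conj (wirt j (F k) z) * z k - F j z) := by
  set S := fun w => ∑ k, F k w * conj (w k) with hS_def
  have hFR : ∀ k, DifferentiableAt ℝ (F k) z := fun k => (hF k).restrictScalars ℝ
  have hconjR : ∀ k, DifferentiableAt ℝ (fun w : Fin n → ℂ => conj (w k)) z :=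
    fun k => (differentiableAt_apply k z).star
  have hS : DifferentiableAt ℝ S z := by fun_prop
  have hSconj : DifferentiableAt ℝ (fun w => conj (S w)) z := hS.star
  have hre : (fun w => ((1 / 2 * (S w).im : ℝ) : ℂ)) =
      fun w => (4 * I)⁻¹ * (S w - conj (S w)) := by
    funext w
    push_cast [im_eq_sub_conj]
    field_simp
    ring
  have hwirtBarS : wirtBar j S z = F j z := by
    rw [hS_def, wirtBar_sum j _ fun k _ => (hFR k).fun_mul (hconjR k)]
    simp [wirtBar_mul j (hFR _) (hconjR _), wirtBar_eq_zero j (hF _), wirtBar_conj, wirt_apply,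
      Pi.single_apply]
  have hwirtS : wirt j S z = ∑ k, wirt j (F k) z * conj (z k) := by
    rw [hS_def, wirt_sum j _ fun k _ => (hFR k).fun_mul (hconjR k)]
    simp [wirt_mul j (hFR _) (hconjR _), wirt_conj, wirtBar_eq_zero j (differentiableAt_apply _ z)]
  rw [hre, wirtBar_const_mul j (hS.fun_sub hSconj), wirtBar_sub j hS hSconj, wirtBar_conj,
    hwirtBarS, hwirtS]
  simp only [map_sum, map_mul, conj_conj]
  field_simp
  linear_combination (F j z - ∑ k, conj (wirt j (F k) z) * z k) * I_sq

lemma wirt_const_mul_sum_conj_mul_sub {q : Fin n → (Fin n → ℂ) → ℂ} {g : (Fin n → ℂ) → ℂ}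
    (hq : ∀ k, DifferentiableAt ℂ (q k) z) (hg : DifferentiableAt ℂ g z) (c : ℂ) (i : Fin n) :
    wirt i (fun w => c * (∑ k, conj (q k w) * w k - g w)) z = c * (conj (q i z) - wirt i g z) := by
  have hqR : ∀ k, DifferentiableAt ℝ (fun w => conj (q k w)) z :=
    fun k => ((hq k).restrictScalars ℝ).star
  have happ : ∀ k, DifferentiableAt ℝ (fun w : Fin n → ℂ => w k) z :=
    fun k => differentiableAt_apply k z
  have hsum : DifferentiableAt ℝ (fun w => ∑ k, conj (q k w) * w k) z := by fun_prop
  have hgR : DifferentiableAt ℝ g z := hg.restrictScalars ℝ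
  rw [wirt_const_mul i (hsum.fun_sub hgR), wirt_sub i hsum hgR,
    wirt_sum i _ fun k _ => (hqR k).fun_mul (happ k)]
  simp [wirt_mul i (hqR _) (happ _), wirt_conj, wirtBar_eq_zero i (hq _), wirt_apply,
    Pi.single_apply]

end KahlerPotential

/-- Let `w*₁,…,w*_n` be holomorphic on an open `U ⊂ ℂⁿ` with
`Zᵢⱼ = ∂w*ⱼ/∂wᵢ` symmetric on `U`. Then for `φ = (1/2) Im (Σᵢ w*ᵢ w̄ᵢ)` one has
`√-1 ∂∂̄φ = (√-1/2) Σᵢⱼ (Im Zᵢⱼ) dwᵢ ∧ dw̄ⱼ`, i.e. the coefficients satisfy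
`∂²φ/∂wᵢ∂w̄ⱼ = (Im Zᵢⱼ)/2` on `U`. -/
theorem stmt14 (n : ℕ) (U : Set (Fin n → ℂ)) (hU : IsOpen U)
    (wstar : Fin n → (Fin n → ℂ) → ℂ)
    (hhol : ∀ j, DifferentiableOn ℂ (wstar j) U)
    (hZsymm : ∀ z ∈ U, ∀ i j : Fin n, wirt i (wstar j) z = wirt j (wstar i) z)
    (φ : (Fin n → ℂ) → ℝ)
    (hφ : ∀ z, φ z = (1 / 2) * (∑ i, wstar i z * (starRingEnd ℂ) (z i)).im) :
    ∀ z ∈ U, ∀ i j : Fin n,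
      wirt i (wirtBar j fun w => (φ w : ℂ)) z = ((wirt i (wstar j) z).im / 2 : ℝ) := by
  intro z hz i j
  have hwstar : ∀ k, ∀ w ∈ U, DifferentiableAt ℂ (wstar k) w :=
    fun k w hw => (hhol k).differentiableAt (hU.mem_nhds hw)
  have hZ : ∀ k, DifferentiableAt ℂ (fun w => wirt j (wstar k) w) z := by
    intro k
    have h : (fun w => fderiv ℂ (wstar k) w (Pi.single j 1)) =ᶠ[𝓝 z] wirt j (wstar k) := by
      filter_upwards [hU.mem_nhds hz] with w hw using (wirt_eq_fderiv j (hwstar k w hw)).symm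
    exact h.differentiableAt_iff.1 ((hhol k).differentiableAt_fderiv_apply hU hz _)
  have hwirtBar : wirtBar j (fun w => (φ w : ℂ)) =ᶠ[𝓝 z]
      fun w => I / 4 * (∑ k, conj (wirt j (wstar k) w) * w k - wstar j w) := by
    filter_upwards [hU.mem_nhds hz] with w hw
    simp only [hφ]
    exact wirtBar_half_im_sum_mul_conj (fun k => hwstar k w hw) j
  rw [wirt_congr_of_eventuallyEq i hwirtBar,
    wirt_const_mul_sum_conj_mul_sub hZ (hwstar j z hz), hZsymm z hz j i]
  push_cast [im_eq_sub_conj]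
  field_simp
  linear_combination 4 * (conj (wirt i (wstar j) z) - wirt i (wstar j) z) * I_sq
end
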